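/- arXiv:1203.4354 — 3 statements merged into one kernel-verified Lean document; each statement's English description precedes it below -/
import Mathlib

section
/- Let ψ : H → ℝ^m be Hadamard differentiable at f_{P,λ_0}, let Λ_n be a Borel-measurable sequence of random regularization parameters, and let ψ'_{D_n,Λ_n} be a measurable estimator of ψ'_{f_{P,λ_0}}. Then the covariance estimator Σ̂_n(D_n,Λ_n) is a measurable map from (Ω,A) to ℝ^{m×m} with its Borel σ-algebra; in particular, ω ↦ f_{D_n(ω),Λ_n(ω)} is measurable and ω ↦ K_{D_n(ω),Λ_n(ω)}^{-1}(Φ(X_i(ω))) is measurable for every i ∈ {1,…,n}. -/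
/-! Every quantity is a continuous function of the data, the regularization parameter and the
derivative estimate, composed with measurable maps; continuous maps into `H` are Borel measurable
because `H` is separable, being the closed span of the continuous image of a separable set.
Continuity of `f_{D,λ}` and of `K_{D,λ}⁻¹` comes from one principle: the zero `z p` of an operator
`F p` that is strongly monotone with modulus `c p` satisfies `‖z p - z p₀‖ ≤ ‖F p (z p₀)‖ / c p`,
so it depends continuously on `p`. By convexity of the loss, the gradient of the regularized
empirical risk is strongly monotone with modulus `2λ`, and so is `K_{D,λ}` since `L'' ≥ 0`. -/

open MeasureTheory ProbabilityTheory Filter Topology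
open scoped RealInnerProductSpace NNReal ENNReal BigOperators

noncomputable section

/-- The setting of the paper: a regularized kernel method for nonparametric
regression/classification.  `X ⊆ ℝ^d` closed and bounded, `Y ⊆ ℝ` closed, `k` the restriction of
an `r`-times continuously differentiable kernel with `r > d/2`, `H` its RKHS with canonical
feature map `Φ` (so `f(x) = ⟪f, Φ x⟫`), `P` an unknown probability distribution on `X × Y`,
`L` a convex `P`-square-integrable Nemitski loss of order `p` with continuous partial
derivatives `L'`, `L''` satisfying the envelope conditions, `fP lam` the unique minimizer of the
`lam`-regularized risk, `fD n D lam` the unique minimizer of the `lam`-regularized empirical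
risk for the data set `D`, and `Z 0, Z 1, …` an i.i.d. sequence with distribution `P` on a
probability space `(Ω, 𝓐, Q)`. -/
structure RegKernelSetting (d : ℕ) (H : Type) [NormedAddCommGroup H]
    [InnerProductSpace ℝ H] [CompleteSpace H] (Ω : Type) [MeasurableSpace Ω] where
  X : Set (EuclideanSpace ℝ (Fin d))
  Y : Set ℝ
  hXclosed : IsClosed X
  hXbdd : Bornology.IsBounded X
  hYclosed : IsClosed Y
  /-- differentiability order of the kernel -/
  r : ℕ
  hr : (d : ℝ) / 2 < r
  /-- the kernel on `ℝ^d × ℝ^d`, whose restriction to `X × X` is the kernel `k` of the RKHS -/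
  ktilde : EuclideanSpace ℝ (Fin d) → EuclideanSpace ℝ (Fin d) → ℝ
  hksmooth : ContDiff ℝ r (Function.uncurry ktilde)
  /-- `k ≠ 0` -/
  hkne : ∃ x x' : X, ktilde x x' ≠ 0
  /-- the canonical feature map of the RKHS `H` -/
  Φ : X → H
  /-- reproducing kernel: `k (x, x') = ⟪Φ x, Φ x'⟫` -/
  hfeature : ∀ x x' : X, ktilde x x' = ⟪Φ x, Φ x'⟫
  /-- `H` is generated by the kernel `k` -/
  hgen : (Submodule.span ℝ (Set.range Φ)).topologicalClosure = ⊤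
  P : Measure (X × Y)
  hP : IsProbabilityMeasure P
  /-- the loss function -/
  L : X → Y → ℝ → ℝ
  hLnonneg : ∀ x y t, 0 ≤ L x y t
  hLconvex : ∀ x y, ConvexOn ℝ Set.univ (L x y)
  /-- order of the Nemitski loss -/
  p : ℝ
  hp : 1 ≤ p
  b : X × Y → ℝ
  c : ℝ
  hc : 0 < c
  hbL2 : MemLp b 2 P
  /-- `L` is a `P`-square-integrable Nemitski loss of order `p` -/
  hNemitski : ∀ x y t, L x y t ≤ b (x, y) + c * |t| ^ p
  /-- first partial derivative of the loss w.r.t. `t` -/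
  L' : X → Y → ℝ → ℝ
  /-- second partial derivative of the loss w.r.t. `t` -/
  L'' : X → Y → ℝ → ℝ
  hL' : ∀ x y t, HasDerivAt (L x y) (L' x y t) t
  hL'' : ∀ x y t, HasDerivAt (L' x y) (L'' x y t) t
  hL'cont : Continuous fun q : (X × Y) × ℝ => L' q.1.1 q.1.2 q.2
  hL''cont : Continuous fun q : (X × Y) × ℝ => L'' q.1.1 q.1.2 q.2
  b' : ℝ → X × Y → ℝ
  hb'L2 : ∀ a : ℝ, 0 < a → MemLp (b' a) 2 P
  hb'bound : ∀ a : ℝ, 0 < a → ∀ (x : X) (y : Y) (t : ℝ), |t| ≤ a → |L' x y t| ≤ b' a (x, y)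
  b'' : ℝ → ℝ
  hb''bound : ∀ a : ℝ, 0 < a → ∀ (x : X) (y : Y) (t : ℝ), |t| ≤ a → |L'' x y t| ≤ b'' a
  /-- `fP lam` is the minimizer of the `lam`-regularized risk in `H` -/
  fP : ℝ → H
  hfPmin : ∀ lam : ℝ, 0 < lam → ∀ g : H,
      (∫ (z : X × Y), L z.1 z.2 ⟪fP lam, Φ z.1⟫ ∂P) + lam * ‖fP lam‖ ^ 2 ≤
      (∫ (z : X × Y), L z.1 z.2 ⟪g, Φ z.1⟫ ∂P) + lam * ‖g‖ ^ 2
  hfPuniq : ∀ lam : ℝ, 0 < lam → ∀ g : H,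
      (∫ (z : X × Y), L z.1 z.2 ⟪g, Φ z.1⟫ ∂P) + lam * ‖g‖ ^ 2 ≤
      (∫ (z : X × Y), L z.1 z.2 ⟪fP lam, Φ z.1⟫ ∂P) + lam * ‖fP lam‖ ^ 2 → g = fP lam
  /-- `fD n D lam` is the minimizer of the `lam`-regularized empirical risk for data `D` -/
  fD : (n : ℕ) → (Fin n → X × Y) → ℝ → H
  hfDmin : ∀ (n : ℕ) (D : Fin n → X × Y) (lam : ℝ), 0 < lam → ∀ g : H,
      ((n : ℝ)⁻¹ * ∑ i, L (D i).1 (D i).2 ⟪fD n D lam, Φ (D i).1⟫) + lam * ‖fD n D lam‖ ^ 2 ≤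
      ((n : ℝ)⁻¹ * ∑ i, L (D i).1 (D i).2 ⟪g, Φ (D i).1⟫) + lam * ‖g‖ ^ 2
  hfDuniq : ∀ (n : ℕ) (D : Fin n → X × Y) (lam : ℝ), 0 < lam → ∀ g : H,
      ((n : ℝ)⁻¹ * ∑ i, L (D i).1 (D i).2 ⟪g, Φ (D i).1⟫) + lam * ‖g‖ ^ 2 ≤
      ((n : ℝ)⁻¹ * ∑ i, L (D i).1 (D i).2 ⟪fD n D lam, Φ (D i).1⟫) +
        lam * ‖fD n D lam‖ ^ 2 → g = fD n D lam
  Q : Measure Ω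
  hQ : IsProbabilityMeasure Q
  /-- the i.i.d. data `(X_1,Y_1), (X_2,Y_2), …` -/
  Z : ℕ → Ω → X × Y
  hZmeas : ∀ i, Measurable (Z i)
  hZlaw : ∀ i, Measure.map (Z i) Q = P
  hZindep : iIndepFun Z Q

variable {d : ℕ} {H : Type} [NormedAddCommGroup H] [InnerProductSpace ℝ H] [CompleteSpace H]
  {Ω : Type} [MeasurableSpace Ω]

/-- the estimator `f_{D_n, Λ_n}` based on the first `n` data points and the (random)
regularization parameter `Λ_n` -/
def RegKernelSetting.fDhat (S : RegKernelSetting d H Ω) (Lam : ℕ → Ω → ℝ) (n : ℕ) (ω : Ω) : H :=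
  S.fD n (fun i : Fin n => S.Z i ω) (Lam n ω)

/-- convergence in distribution (weak convergence) of a sequence of random elements to a
probability measure -/
def TendstoInDistribution {α : Type*} [TopologicalSpace α] [MeasurableSpace α]
    (Q : Measure Ω) (W : ℕ → Ω → α) (μ : Measure α) : Prop :=
  ∀ g : BoundedContinuousFunction α ℝ,
    Tendsto (fun n => ∫ ω, g (W n ω) ∂Q) atTop (𝓝 (∫ x, g x ∂μ))

/-- `ψ : H → ℝ^m` is Hadamard differentiable at `f0` with derivative `ψ' ∈ H^m`. -/
def HadamardDiffAt {H : Type} [NormedAddCommGroup H] [InnerProductSpace ℝ H]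
    {m : ℕ} (ψ : H → (Fin m → ℝ)) (f0 : H) (ψ' : Fin m → H) : Prop :=
  ∀ (t : ℕ → ℝ) (hs : ℕ → H) (h : H),
    (∀ ℓ, 0 < t ℓ) → Tendsto t atTop (𝓝 0) → Tendsto hs atTop (𝓝 h) →
    Tendsto (fun ℓ => (t ℓ)⁻¹ • (ψ (f0 + t ℓ • hs ℓ) - ψ f0)) atTop
      (𝓝 fun j => ⟪ψ' j, h⟫)

/-- the random operator `K_{D_n,Λ_n} : H → H`,
`f ↦ 2Λ_n f + (1/n) ∑ᵢ L''(Xᵢ,Yᵢ,f_{D_n,Λ_n}(Xᵢ)) f(Xᵢ) Φ(Xᵢ)` -/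
def RegKernelSetting.KD (S : RegKernelSetting d H Ω) (n : ℕ) (D : Fin n → S.X × S.Y)
    (lam : ℝ) (f : H) : H :=
  (2 * lam) • f + (n : ℝ)⁻¹ •
    ∑ i, (S.L'' (D i).1 (D i).2 ⟪S.fD n D lam, S.Φ (D i).1⟫ * ⟪f, S.Φ (D i).1⟫) • S.Φ (D i).1

/-- the random function `g_{D_n,Λ_n}(x,y)
  = −L'(x,y,f_{D_n,Λ_n}(x)) ⋅ (⟪ψ'_{D_n,Λ_n,j}, K_{D_n,Λ_n}⁻¹(Φ(x))⟫)_{j=1,…,m}` -/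
def gHat (S : RegKernelSetting d H Ω) (Lam : ℕ → Ω → ℝ)
    (KDinv : (n : ℕ) → (Fin n → S.X × S.Y) → ℝ → H → H)
    {m : ℕ} (ψest : ℕ → Ω → Fin m → H) (n : ℕ) (ω : Ω) (z : S.X × S.Y) (j : Fin m) : ℝ :=
  -(S.L' z.1 z.2 ⟪S.fD n (fun i => S.Z i ω) (Lam n ω), S.Φ z.1⟫) *
    ⟪ψest n ω j, KDinv n (fun i => S.Z i ω) (Lam n ω) (S.Φ z.1)⟫

/-- the covariance estimator `Σ̂_n(D_n,Λ_n) = (1/n) ∑ᵢ g̃ᵢ g̃ᵢᵀ` where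
`g̃ᵢ = g_{D_n,Λ_n}(Xᵢ,Yᵢ) − (1/n) ∑_j g_{D_n,Λ_n}(X_j,Y_j)` -/
def sigmaHat (S : RegKernelSetting d H Ω) (Lam : ℕ → Ω → ℝ)
    (KDinv : (n : ℕ) → (Fin n → S.X × S.Y) → ℝ → H → H)
    {m : ℕ} (ψest : ℕ → Ω → Fin m → H) (n : ℕ) (ω : Ω) (j j' : Fin m) : ℝ :=
  (n : ℝ)⁻¹ * ∑ i : Fin n,
    (gHat S Lam KDinv ψest n ω (S.Z i ω) j -
      (n : ℝ)⁻¹ * ∑ i' : Fin n, gHat S Lam KDinv ψest n ω (S.Z i' ω) j) *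
    (gHat S Lam KDinv ψest n ω (S.Z i ω) j' -
      (n : ℝ)⁻¹ * ∑ i' : Fin n, gHat S Lam KDinv ψest n ω (S.Z i' ω) j')

section General

variable {E : Type*} [NormedAddCommGroup E] [InnerProductSpace ℝ E]

theorem continuous_of_continuous_inner {α : Type*} [TopologicalSpace α] {Φ : α → E}
    (hk : Continuous fun p : α × α => ⟪Φ p.1, Φ p.2⟫) : Continuous Φ := by
  rw [continuous_iff_continuousAt]
  intro x
  have hdist : ∀ x', ‖Φ x' - Φ x‖ = √(⟪Φ x', Φ x'⟫ - 2 * ⟪Φ x', Φ x⟫ + ⟪Φ x, Φ x⟫) := by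
    intro x'
    rw [real_inner_self_eq_norm_sq, real_inner_self_eq_norm_sq, ← norm_sub_sq_real,
      Real.sqrt_sq (norm_nonneg _)]
  have hcont : Continuous fun x' => ⟪Φ x', Φ x'⟫ - 2 * ⟪Φ x', Φ x⟫ + ⟪Φ x, Φ x⟫ := by
    have hdiag := hk.comp (continuous_id.prodMk continuous_id)
    have hcol := hk.comp (continuous_id.prodMk (continuous_const (y := x)))
    exact (hdiag.sub (continuous_const.mul hcol)).add continuous_const
  rw [ContinuousAt, tendsto_iff_norm_sub_tendsto_zero]
  simp_rw [hdist]
  have hlim := hcont.sqrt.tendsto x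
  rwa [show ⟪Φ x, Φ x⟫ - 2 * ⟪Φ x, Φ x⟫ + ⟪Φ x, Φ x⟫ = 0 by ring, Real.sqrt_zero] at hlim

theorem separableSpace_of_dense_span {α : Type*} [TopologicalSpace α]
    [TopologicalSpace.SeparableSpace α] {Φ : α → E} (hΦ : Continuous Φ)
    (hspan : (Submodule.span ℝ (Set.range Φ)).topologicalClosure = ⊤) :
    TopologicalSpace.SeparableSpace E := by
  rw [← TopologicalSpace.isSeparable_univ_iff, ← Submodule.top_coe (R := ℝ), ← hspan,
    Submodule.topologicalClosure_coe]
  exact (TopologicalSpace.isSeparable_range hΦ).span.closure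

theorem continuous_of_stronglyMonotone_zero {T : Type*} [TopologicalSpace T]
    {F : T → E → E} {z : T → E} {c : T → ℝ} (hc : Continuous c) (hc_pos : ∀ p, 0 < c p)
    (hF : ∀ u, Continuous fun p => F p u)
    (hmono : ∀ p u v, c p * ‖u - v‖ ^ 2 ≤ ⟪F p u - F p v, u - v⟫)
    (hz : ∀ p, F p (z p) = 0) : Continuous z := by
  rw [continuous_iff_continuousAt]
  intro p₀
  have hbound : ∀ p, ‖z p - z p₀‖ ≤ ‖F p (z p₀)‖ / c p := fun p => by
    rw [le_div_iff₀ (hc_pos p)]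
    have := (hmono p (z p) (z p₀)).trans (real_inner_le_norm _ _)
    rw [hz, zero_sub, norm_neg, sq, ← mul_assoc] at this
    rcases (norm_nonneg (z p - z p₀)).eq_or_lt with h | h
    · rw [← h, zero_mul]; exact norm_nonneg _
    · nlinarith
  rw [ContinuousAt, tendsto_iff_norm_sub_tendsto_zero]
  refine squeeze_zero (fun p => norm_nonneg _) hbound ?_
  have hlim := ((hF (z p₀)).norm.tendsto p₀).div (hc.tendsto p₀) (hc_pos p₀).ne'
  rwa [hz, norm_zero, zero_div] at hlim

end General

namespace RegKernelSetting

variable (S : RegKernelSetting d H Ω)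

theorem continuous_Φ : Continuous S.Φ := by
  refine continuous_of_continuous_inner ?_
  simp_rw [← S.hfeature]
  exact S.hksmooth.continuous.comp ((continuous_subtype_val.comp continuous_fst).prodMk
    (continuous_subtype_val.comp continuous_snd))

theorem monotone_L' (x : S.X) (y : S.Y) : Monotone (S.L' x y) := by
  have hderiv : deriv (S.L x y) = S.L' x y := funext fun t => (S.hL' x y t).deriv
  rw [← hderiv, ← monotoneOn_univ]
  exact (S.hLconvex x y).monotoneOn_deriv fun t _ => (S.hL' x y t).differentiableAt

theorem L''_nonneg (x : S.X) (y : S.Y) (t : ℝ) : 0 ≤ S.L'' x y t :=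
  (S.hL'' x y t).nonneg_of_monotone (S.monotone_L' x y)

def empRisk (n : ℕ) (D : Fin n → S.X × S.Y) (lam : ℝ) (g : H) : ℝ :=
  ((n : ℝ)⁻¹ * ∑ i, S.L (D i).1 (D i).2 ⟪g, S.Φ (D i).1⟫) + lam * ‖g‖ ^ 2

def empRiskGrad (n : ℕ) (D : Fin n → S.X × S.Y) (lam : ℝ) (g : H) : H :=
  (2 * lam) • g + (n : ℝ)⁻¹ • ∑ i, S.L' (D i).1 (D i).2 ⟪g, S.Φ (D i).1⟫ • S.Φ (D i).1

theorem hasFDerivAt_empRisk (n : ℕ) (D : Fin n → S.X × S.Y) (lam : ℝ) (g : H) :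
    HasFDerivAt (S.empRisk n D lam) (innerSL ℝ (S.empRiskGrad n D lam g)) g := by
  have hloss : ∀ i, HasFDerivAt (fun g : H => S.L (D i).1 (D i).2 ⟪g, S.Φ (D i).1⟫)
      (S.L' (D i).1 (D i).2 ⟪g, S.Φ (D i).1⟫ • innerSL ℝ (S.Φ (D i).1)) g := fun i => by
    have hlin : HasFDerivAt (fun g : H => ⟪g, S.Φ (D i).1⟫) (innerSL ℝ (S.Φ (D i).1)) g := by
      convert (innerSL ℝ (S.Φ (D i).1)).hasFDerivAt using 1
      ext v
      exact real_inner_comm _ _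
    exact (S.hL' _ _ _).comp_hasFDerivAt g hlin
  refine (((HasFDerivAt.fun_sum (u := Finset.univ) fun i _ => hloss i).const_mul
    (n : ℝ)⁻¹).add ((hasStrictFDerivAt_norm_sq g).hasFDerivAt.const_mul lam)).congr_fderiv ?_
  ext v
  simp only [add_apply, smul_apply, sum_apply, coe_innerSL_apply, real_inner_comm, smul_eq_mul, nsmul_eq_mul,
    Nat.cast_ofNat, empRiskGrad, map_add, map_smul, map_sum]
  ring

theorem empRiskGrad_fD_eq_zero (n : ℕ) (D : Fin n → S.X × S.Y) (lam : ℝ) (hlam : 0 < lam) :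
    S.empRiskGrad n D lam (S.fD n D lam) = 0 := by
  have hmin : IsLocalMin (S.empRisk n D lam) (S.fD n D lam) :=
    Filter.Eventually.of_forall (S.hfDmin n D lam hlam)
  have h := hmin.hasFDerivAt_eq_zero (S.hasFDerivAt_empRisk n D lam _)
  rwa [← norm_eq_zero, innerSL_apply_norm, norm_eq_zero] at h

theorem le_inner_empRiskGrad_sub (n : ℕ) (D : Fin n → S.X × S.Y) {lam : ℝ} (g₁ g₂ : H) :
    2 * lam * ‖g₁ - g₂‖ ^ 2 ≤ ⟪S.empRiskGrad n D lam g₁ - S.empRiskGrad n D lam g₂, g₁ - g₂⟫ :=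
  calc 2 * lam * ‖g₁ - g₂‖ ^ 2
      ≤ 2 * lam * ‖g₁ - g₂‖ ^ 2 + (n : ℝ)⁻¹ * ∑ i,
          (S.L' (D i).1 (D i).2 ⟪g₁, S.Φ (D i).1⟫ - S.L' (D i).1 (D i).2 ⟪g₂, S.Φ (D i).1⟫) *
            (⟪g₁, S.Φ (D i).1⟫ - ⟪g₂, S.Φ (D i).1⟫) :=
        le_add_of_nonneg_right <| mul_nonneg (by positivity) <| Finset.sum_nonneg fun i _ =>
          ((S.monotone_L' _ _).monovary monotone_id).sub_mul_sub_nonneg _ _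
    _ = ⟪S.empRiskGrad n D lam g₁ - S.empRiskGrad n D lam g₂, g₁ - g₂⟫ := by
        simp only [empRiskGrad, inner_sub_left, inner_sub_right, inner_add_left,
          real_inner_smul_left, sum_inner, real_inner_self_eq_norm_sq, norm_sub_sq_real]
        simp only [real_inner_comm, sub_mul, mul_sub, Finset.sum_sub_distrib]
        ring

theorem continuous_empRiskGrad (n : ℕ) (g : H) :
    Continuous fun p : (Fin n → S.X × S.Y) × ℝ => S.empRiskGrad n p.1 p.2 g := by
  have hΦ : ∀ i, Continuous fun p : (Fin n → S.X × S.Y) × ℝ => S.Φ (p.1 i).1 := fun i =>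
    S.continuous_Φ.comp ((continuous_apply i).comp continuous_fst).fst
  have hL' : ∀ i, Continuous fun p : (Fin n → S.X × S.Y) × ℝ =>
      S.L' (p.1 i).1 (p.1 i).2 ⟪g, S.Φ (p.1 i).1⟫ := fun i =>
    S.hL'cont.comp (((continuous_apply i).comp continuous_fst).prodMk
      (continuous_const.inner (hΦ i)))
  unfold empRiskGrad
  fun_prop

theorem continuous_fD (n : ℕ) :
    Continuous fun p : (Fin n → S.X × S.Y) × {l : ℝ // 0 < l} => S.fD n p.1 p.2 :=
  continuous_of_stronglyMonotone_zero (c := fun p => 2 * p.2.1) (by fun_prop)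
    (fun p => mul_pos two_pos p.2.2)
    (fun g => (S.continuous_empRiskGrad n g).comp
      (continuous_fst.prodMk (continuous_subtype_val.comp continuous_snd)))
    (fun p => S.le_inner_empRiskGrad_sub n p.1)
    (fun p => S.empRiskGrad_fD_eq_zero n p.1 p.2 p.2.2)

theorem KD_sub (n : ℕ) (D : Fin n → S.X × S.Y) (lam : ℝ) (f g : H) :
    S.KD n D lam f - S.KD n D lam g = S.KD n D lam (f - g) := by
  simp only [KD, inner_sub_left, mul_sub, sub_smul, smul_sub, Finset.sum_sub_distrib]
  abel

theorem le_inner_KD_self (n : ℕ) (D : Fin n → S.X × S.Y) (lam : ℝ) (v : H) :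
    2 * lam * ‖v‖ ^ 2 ≤ ⟪S.KD n D lam v, v⟫ := by
  simp only [KD, inner_add_left, real_inner_smul_left, sum_inner, real_inner_self_eq_norm_sq]
  refine le_add_of_nonneg_right (mul_nonneg (by positivity) (Finset.sum_nonneg fun i _ => ?_))
  rw [mul_assoc, real_inner_comm v (S.Φ (D i).1), ← sq]
  exact mul_nonneg (S.L''_nonneg _ _ _) (sq_nonneg _)

theorem continuous_KD (n : ℕ) (u : H) :
    Continuous fun p : (Fin n → S.X × S.Y) × {l : ℝ // 0 < l} => S.KD n p.1 p.2 u := by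
  have hΦ : ∀ i, Continuous fun p : (Fin n → S.X × S.Y) × {l : ℝ // 0 < l} => S.Φ (p.1 i).1 :=
    fun i => S.continuous_Φ.comp ((continuous_apply i).comp continuous_fst).fst
  have hL'' : ∀ i, Continuous fun p : (Fin n → S.X × S.Y) × {l : ℝ // 0 < l} =>
      S.L'' (p.1 i).1 (p.1 i).2 ⟪S.fD n p.1 p.2, S.Φ (p.1 i).1⟫ := fun i =>
    S.hL''cont.comp (((continuous_apply i).comp continuous_fst).prodMk
      ((S.continuous_fD n).inner (hΦ i)))
  unfold KD
  fun_prop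

theorem continuous_rightInverse_KD (n : ℕ) {KDinv : (Fin n → S.X × S.Y) → ℝ → H → H}
    (hKDinv : ∀ D lam, 0 < lam → ∀ f, S.KD n D lam (KDinv D lam f) = f) :
    Continuous fun p : ((Fin n → S.X × S.Y) × {l : ℝ // 0 < l}) × H =>
      KDinv p.1.1 p.1.2 p.2 :=
  continuous_of_stronglyMonotone_zero (F := fun p u => S.KD n p.1.1 p.1.2 u - p.2)
    (c := fun p => 2 * p.1.2.1) (by fun_prop) (fun p => mul_pos two_pos p.1.2.2)
    (fun u => ((S.continuous_KD n u).comp continuous_fst).sub continuous_snd)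
    (fun p u v => by
      rw [sub_sub_sub_cancel_right, S.KD_sub]
      exact S.le_inner_KD_self n _ _ _)
    (fun p => sub_eq_zero.2 (hKDinv _ _ p.1.2.2 _))

end RegKernelSetting

theorem covariance_estimator_measurable_general
    [MeasurableSpace H] [BorelSpace H]
    (S : RegKernelSetting d H Ω)
    {m : ℕ}
    (Lam : ℕ → Ω → ℝ) (hLam : ∀ n, Measurable (Lam n)) (hLampos : ∀ n ω, 0 < Lam n ω)
    (ψest : ℕ → Ω → Fin m → H) (hψest : ∀ n, Measurable (ψest n))
    (KDinv : (n : ℕ) → (Fin n → S.X × S.Y) → ℝ → H → H)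
    (hKDinv : ∀ (n : ℕ) (D : Fin n → S.X × S.Y) (lam : ℝ), 0 < lam →
      (∀ f, KDinv n D lam (S.KD n D lam f) = f) ∧ (∀ f, S.KD n D lam (KDinv n D lam f) = f)) :
    (∀ n : ℕ, Measurable fun ω => S.fD n (fun i => S.Z i ω) (Lam n ω)) ∧
    (∀ (n : ℕ) (i : Fin n), Measurable fun ω =>
        KDinv n (fun i' => S.Z i' ω) (Lam n ω) (S.Φ (S.Z i ω).1)) ∧
    (∀ n : ℕ, Measurable fun ω => fun j j' : Fin m =>
        sigmaHat S Lam KDinv ψest n ω j j') := by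
  have := separableSpace_of_dense_span S.continuous_Φ S.hgen
  have : SecondCountableTopology H := UniformSpace.secondCountable_of_separable H
  have hdata : ∀ n, Measurable fun ω =>
      ((fun i : Fin n => S.Z i ω), (⟨Lam n ω, hLampos n ω⟩ : {l : ℝ // 0 < l})) := fun n =>
    (measurable_pi_lambda (fun ω (i : Fin n) => S.Z i ω) fun i => S.hZmeas i).prodMk
      (hLam n).subtype_mk
  have hΦZ : ∀ i, Measurable fun ω => S.Φ (S.Z i ω).1 := fun i =>
    S.continuous_Φ.measurable.comp (S.hZmeas i).fst
  have hfD : ∀ n, Measurable fun ω => S.fD n (fun i => S.Z i ω) (Lam n ω) := fun n =>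
    (S.continuous_fD n).measurable.comp (hdata n)
  have hKDinvΦ : ∀ n (i : Fin n), Measurable fun ω =>
      KDinv n (fun i' => S.Z i' ω) (Lam n ω) (S.Φ (S.Z i ω).1) := fun n i =>
    (S.continuous_rightInverse_KD n fun D lam hlam => (hKDinv n D lam hlam).2).measurable.comp
      ((hdata n).prodMk (hΦZ i))
  refine ⟨hfD, hKDinvΦ, fun n => ?_⟩
  have hg : ∀ (i : Fin n) j, Measurable fun ω => gHat S Lam KDinv ψest n ω (S.Z i ω) j :=
    fun i j =>
      (S.hL'cont.measurable.comp ((S.hZmeas i).prodMk ((hfD n).inner (hΦZ i)))).neg.mul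
        (((measurable_pi_apply j).comp (hψest n)).inner (hKDinvΦ n i))
  unfold sigmaHat
  fun_prop

/-- measurability of the covariance estimator.  Given a Hadamard
differentiable `ψ`, Borel-measurable random regularization parameters `Λ_n`, and a measurable
estimator `ψ'_{D_n,Λ_n}` of the derivative, the covariance estimator `Σ̂_n(D_n,Λ_n)` is a
measurable map into `ℝ^{m×m}`; in particular `ω ↦ f_{D_n(ω),Λ_n(ω)}` and
`ω ↦ K_{D_n(ω),Λ_n(ω)}⁻¹(Φ(Xᵢ(ω)))` are measurable. -/
theorem covariance_estimator_measurable
    [MeasurableSpace H] [BorelSpace H]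
    (S : RegKernelSetting d H Ω) (lam0 : ℝ) (hlam0 : 0 < lam0)
    {m : ℕ} (ψ : H → (Fin m → ℝ)) (ψ' : Fin m → H)
    (hψ : HadamardDiffAt ψ (S.fP lam0) ψ')
    (Lam : ℕ → Ω → ℝ) (hLam : ∀ n, Measurable (Lam n)) (hLampos : ∀ n ω, 0 < Lam n ω)
    (ψest : ℕ → Ω → Fin m → H) (hψest : ∀ n, Measurable (ψest n))
    (KDinv : (n : ℕ) → (Fin n → S.X × S.Y) → ℝ → H → H)
    (hKDinv : ∀ (n : ℕ) (D : Fin n → S.X × S.Y) (lam : ℝ), 0 < lam →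
      (∀ f, KDinv n D lam (S.KD n D lam f) = f) ∧ (∀ f, S.KD n D lam (KDinv n D lam f) = f)) :
    (∀ n : ℕ, Measurable fun ω => S.fD n (fun i => S.Z i ω) (Lam n ω)) ∧
    (∀ (n : ℕ) (i : Fin n), Measurable fun ω =>
        KDinv n (fun i' => S.Z i' ω) (Lam n ω) (S.Φ (S.Z i ω).1)) ∧
    (∀ n : ℕ, Measurable fun ω => fun j j' : Fin m =>
        sigmaHat S Lam KDinv ψest n ω j j') :=
  covariance_estimator_measurable_general S Lam hLam hLampos ψest hψest KDinv hKDinv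
end
end

section
/- Fix a data set D_n = ((x_1,y_1),…,(x_n,y_n)) ∈ (X×Y)^n and λ ∈ (0,∞), and let K_{D_n,λ} : H → H be the invertible continuous linear operator f ↦ 2λf + (1/n)Σᵢ L''(x_i,y_i,f_{D_n,λ}(x_i)) f(x_i) Φ(x_i). Let {Φ(x_{i_1}),…,Φ(x_{i_r})} be a maximal linearly independent subset of {Φ(x_1),…,Φ(x_n)}, let B_{D_n} ∈ ℝ^{r×n} be the matrix of coefficients β_{ji} with Φ(x_i) = Σ_{j=1}^r β_{ji} Φ(x_{i_j}), and let A_{D_n,λ} = 2λ·Id_{n×n} + (1/n)·D·K where D is the diagonal matrix with entries L''(x_i,y_i,f_{D_n,λ}(x_i)) and K is the Gram matrix (k(x_i,x_ℓ))_{i,ℓ}. Fix x ∈ X and let w(x) ∈ ℝ^n have entries w_i = −(1/(2nλ))·L''(x_i,y_i,f_{D_n,λ}(x_i))·k(x_i,x). Then: (i) the linear system B_{D_n}A_{D_n,λ}·α = B_{D_n}·w(x) has a solution α ∈ ℝ^n (in particular α = (B_{D_n}A_{D_n,λ})⁻B_{D_n}w(x) with the Moore–Penrose pseudoinverse is a solution);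 and (ii) for every solution α of this system, K_{D_n,λ}^{-1}(Φ(x)) = (1/(2λ))Φ(x) + Σᵢ αᵢ Φ(x_i). -/
/-! Since `K f - 2λ f` lies in the span of the features `Φ(xᵢ)`, so does
`K⁻¹(Φ x) - (2λ)⁻¹ Φ x`. For `f = (2λ)⁻¹ Φ x + ∑ αᵢ Φ(xᵢ)` one computes
`K f = Φ x + ∑ ((A α)ᵢ - wᵢ) Φ(xᵢ)`, and by linear independence of the chosen basis the sum
vanishes iff `B (A α - w) = 0`. So `K f = Φ x` exactly when `α` solves `B A α = B w`: the
system has a solution (the coefficients of `K⁻¹(Φ x)`), hence `BA·P·BA = BA` makes `P B w` one,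
and every solution gives `K⁻¹(Φ x)`. -/

open MeasureTheory Filter Topology
open scoped RealInnerProductSpace BigOperators

noncomputable section

variable {d : ℕ} {H : Type} [NormedAddCommGroup H] [InnerProductSpace ℝ H] [CompleteSpace H]

section Coordinates

open Matrix

variable {ι κ R M : Type*} [Fintype ι] [Fintype κ]

theorem Matrix.mulVec_mulVec_of_mul_mul_eq_self {m n : Type*} [Fintype m] [Fintype n]
    [NonUnitalSemiring R] {M : Matrix m n R} {P : Matrix n m R} (hP : M * P * M = M) {α : n → R}
    {v : m → R} (hα : M *ᵥ α = v) : M *ᵥ (P *ᵥ v) = v := by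
  rw [← hα, mulVec_mulVec, mulVec_mulVec, hP]

theorem sum_smul_eq_sum_mulVec_smul [CommSemiring R] [AddCommMonoid M] [Module R M]
    {φ : ι → M} {b : κ → M} {B : Matrix κ ι R}
    (hB : ∀ i, φ i = ∑ j, B j i • b j) (u : ι → R) :
    ∑ i, u i • φ i = ∑ j, (B *ᵥ u) j • b j := by
  simp only [hB, Finset.smul_sum, smul_smul, mulVec, dotProduct, Finset.sum_smul]
  rw [Finset.sum_comm]
  simp only [mul_comm]

theorem sum_smul_eq_zero_iff_mulVec_eq_zero [CommRing R] [AddCommGroup M] [Module R M]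
    {φ : ι → M} {b : κ → M} {B : Matrix κ ι R}
    (hb : LinearIndependent R b) (hB : ∀ i, φ i = ∑ j, B j i • b j) (u : ι → R) :
    ∑ i, u i • φ i = 0 ↔ B *ᵥ u = 0 := by
  rw [sum_smul_eq_sum_mulVec_smul hB]
  constructor
  · exact fun h => funext (Fintype.linearIndependent_iff.mp hb _ h)
  · intro h
    simp [h]

end Coordinates

section ShiftedGram

open Matrix

variable {E ι : Type*} [NormedAddCommGroup E] [InnerProductSpace ℝ E] [Fintype ι]

/-- `K_{D_n,λ}` is `shiftedGramOp (Φ ∘ x) (2λ) (1/n) (L''(xᵢ, yᵢ, f_{D_n,λ}(xᵢ)))ᵢ`. -/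
def shiftedGramOp (φ : ι → E) (μ s : ℝ) (c : ι → ℝ) (f : E) : E :=
  μ • f + s • ∑ i, (c i * ⟪f, φ i⟫) • φ i

theorem exists_eq_inv_smul_add_sum_of_shiftedGramOp_eq {φ : ι → E} {μ s : ℝ} {c : ι → ℝ}
    (hμ : μ ≠ 0) {f ξ : E} (hf : shiftedGramOp φ μ s c f = ξ) :
    ∃ α : ι → ℝ, f = μ⁻¹ • ξ + ∑ i, α i • φ i := by
  have hspan : f - μ⁻¹ • ξ ∈ Submodule.span ℝ (Set.range φ) := by
    have hsum : ∑ i, (c i * ⟪f, φ i⟫) • φ i ∈ Submodule.span ℝ (Set.range φ) :=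
      Submodule.sum_mem _ fun i _ => Submodule.smul_mem _ _ (Submodule.subset_span ⟨i, rfl⟩)
    have hdiff : f - μ⁻¹ • ξ = -(μ⁻¹ * s) • ∑ i, (c i * ⟪f, φ i⟫) • φ i := by
      rw [← hf, shiftedGramOp, smul_add, smul_smul, inv_mul_cancel₀ hμ, one_smul, smul_smul,
        neg_smul, sub_add_cancel_left]
    rw [hdiff]
    exact Submodule.smul_mem _ _ hsum
  obtain ⟨α, hα⟩ := (Submodule.mem_span_range_iff_exists_fun ℝ).mp hspan
  exact ⟨α, by rw [hα, add_sub_cancel]⟩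

theorem shiftedGramOp_inv_smul_add_sum [DecidableEq ι] {φ : ι → E} {μ s : ℝ} {c : ι → ℝ}
    (hμ : μ ≠ 0) {A : Matrix ι ι ℝ} (hA : ∀ i l, A i l = (if i = l then μ else 0) + s * c i * ⟪φ i, φ l⟫)
    {ξ : E} {w : ι → ℝ} (hw : ∀ i, w i = -(s * μ⁻¹) * (c i * ⟪φ i, ξ⟫)) (α : ι → ℝ) :
    shiftedGramOp φ μ s c (μ⁻¹ • ξ + ∑ i, α i • φ i) =
      ξ + ∑ i, ((A *ᵥ α) i - w i) • φ i := by
  set f := μ⁻¹ • ξ + ∑ i, α i • φ i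
  have hinner : ∀ i, ⟪f, φ i⟫ = μ⁻¹ * ⟪φ i, ξ⟫ + ∑ l, ⟪φ i, φ l⟫ * α l := fun i => by
    rw [real_inner_comm]
    simp only [f, inner_add_right, inner_sum, real_inner_smul_right, mul_comm (α _)]
  have hcoeff : ∀ i, (A *ᵥ α) i - w i = μ * α i + s * (c i * ⟪f, φ i⟫) := fun i => by
    simp only [mulVec, dotProduct, hA, add_mul, Finset.sum_add_distrib, ite_mul,
      zero_mul, Finset.sum_ite_eq, Finset.mem_univ, if_true, hw, hinner]
    simp only [Finset.mul_sum, mul_add, mul_assoc]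
    ring
  have hμf : μ • f = ξ + μ • ∑ i, α i • φ i := by rw [smul_add, smul_inv_smul₀ hμ]
  simp only [shiftedGramOp, hμf, hcoeff, add_smul, Finset.sum_add_distrib, mul_smul,
    ← Finset.smul_sum, add_assoc]

end ShiftedGram

theorem computation_of_Kinv_feature_general
    (X : Set (EuclideanSpace ℝ (Fin d))) (Y : Set ℝ)
    (ktilde : EuclideanSpace ℝ (Fin d) → EuclideanSpace ℝ (Fin d) → ℝ)
    (Φ : X → H) (hfeature : ∀ x x' : X, ktilde x x' = ⟪Φ x, Φ x'⟫)
    (L'' : X → Y → ℝ → ℝ)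
    (n : ℕ) (D : Fin n → X × Y) (lam : ℝ) (hlam : 0 < lam)
    (fDl : H)
    -- the invertible continuous linear operator `K_{D_n,λ}` and its inverse
    (K Kinv : H → H)
    (hK : ∀ f : H, K f = (2 * lam) • f + (n : ℝ)⁻¹ •
      ∑ i, (L'' (D i).1 (D i).2 ⟪fDl, Φ (D i).1⟫ * ⟪f, Φ (D i).1⟫) • Φ (D i).1)
    (hKinv₁ : ∀ f : H, Kinv (K f) = f) (hKinv₂ : ∀ f : H, K (Kinv f) = f)
    -- a maximal linearly independent subset `Φ(x_{i₁}), …, Φ(x_{i_ρ})` of the features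
    (ρ : ℕ) (idx : Fin ρ → Fin n)
    (hli : LinearIndependent ℝ fun j : Fin ρ => Φ (D (idx j)).1)
    -- the coefficients `β` expressing every feature in this basis, and the matrix `B_{D_n}`
    (β : Fin ρ → Fin n → ℝ)
    (hβ : ∀ i : Fin n, Φ (D i).1 = ∑ j, β j i • Φ (D (idx j)).1)
    (Bmat : Matrix (Fin ρ) (Fin n) ℝ) (hB : Bmat = Matrix.of β)
    -- the matrix `A_{D_n,λ} = 2λ Id + (1/n) L''_{D_n,λ} ⬝ (k(xᵢ,xₗ))`
    (Amat : Matrix (Fin n) (Fin n) ℝ)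
    (hA : ∀ i l : Fin n, Amat i l = (if i = l then 2 * lam else 0) +
      (n : ℝ)⁻¹ * L'' (D i).1 (D i).2 ⟪fDl, Φ (D i).1⟫ * ktilde (D i).1 (D l).1)
    (x : X)
    -- the right-hand side `w(x)`
    (w : Fin n → ℝ)
    (hw : ∀ i : Fin n, w i = -(1 / (2 * n * lam)) *
      (L'' (D i).1 (D i).2 ⟪fDl, Φ (D i).1⟫ * ktilde (D i).1 x))
    -- a Moore–Penrose pseudoinverse `(B A)⁻` of `B A`
    (pinv : Matrix (Fin n) (Fin ρ) ℝ)
    (hp₁ : Bmat * Amat * pinv * (Bmat * Amat) = Bmat * Amat) :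
    -- (i) `α = (BA)⁻ B w(x)` solves the linear system `B A α = B w(x)`
    (Bmat * Amat).mulVec (pinv.mulVec (Bmat.mulVec w)) = Bmat.mulVec w ∧
    -- (ii) every solution `α` of the system yields `K⁻¹(Φ(x)) = (1/(2λ)) Φ(x) + ∑ᵢ αᵢ Φ(xᵢ)`
    ∀ α : Fin n → ℝ, (Bmat * Amat).mulVec α = Bmat.mulVec w →
      Kinv (Φ x) = (2 * lam)⁻¹ • Φ x + ∑ i, α i • Φ (D i).1 := by
  subst hB
  set φ : Fin n → H := fun i => Φ (D i).1
  set c : Fin n → ℝ := fun i => L'' (D i).1 (D i).2 ⟪fDl, Φ (D i).1⟫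
  have hμ : 2 * lam ≠ 0 := by positivity
  have hKop : K = shiftedGramOp φ (2 * lam) (n : ℝ)⁻¹ c := funext hK
  have hsolves : ∀ α, K ((2 * lam)⁻¹ • Φ x + ∑ i, α i • φ i) = Φ x ↔
      (Bmat * Amat).mulVec α = Bmat.mulVec w := fun α => by
    rw [hKop, shiftedGramOp_inv_smul_add_sum hμ (A := Amat) (w := w)
      (fun i l => by rw [hA, hfeature]) (fun i => by rw [hw, hfeature]; ring),
      add_eq_left, sum_smul_eq_zero_iff_mulVec_eq_zero hli hβ,
      ← Pi.sub_def, Matrix.mulVec_sub, sub_eq_zero, Matrix.mulVec_mulVec]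
  obtain ⟨α₀, hα₀⟩ := exists_eq_inv_smul_add_sum_of_shiftedGramOp_eq hμ
    (hKop ▸ hKinv₂ (Φ x))
  refine ⟨Matrix.mulVec_mulVec_of_mul_mul_eq_self hp₁ ((hsolves α₀).mp ?_), fun α hα => ?_⟩
  · rw [← hα₀, hKinv₂]
  · rw [← hKinv₁ ((2 * lam)⁻¹ • Φ x + ∑ i, α i • φ i), (hsolves α).mpr hα]

/-- Proposition: computation of `K_{D_n,λ}^{-1}(Φ(x))`.
With `B_{D_n}` the coefficient matrix of the data features w.r.t. a maximal linearly
independent subset `Φ(x_{i₁}), …, Φ(x_{i_ρ})`, `A_{D_n,λ} = 2λ Id + (1/n) L''_{D_n,λ} K_gram`,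
and `w(x)ᵢ = −(1/(2nλ)) L''(xᵢ,yᵢ,f_{D_n,λ}(xᵢ)) k(xᵢ,x)`:  the linear system
`B A α = B w(x)` is solvable — in particular `α = (BA)⁻ B w(x)` with `(BA)⁻` the Moore–Penrose
pseudoinverse (characterized by the four Penrose conditions) is a solution — and every
solution `α` satisfies `K_{D_n,λ}^{-1}(Φ(x)) = (1/(2λ)) Φ(x) + ∑ᵢ αᵢ Φ(xᵢ)`. -/
theorem computation_of_Kinv_feature
    (X : Set (EuclideanSpace ℝ (Fin d))) (Y : Set ℝ)
    (hXclosed : IsClosed X) (hXbdd : Bornology.IsBounded X) (hYclosed : IsClosed Y)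
    (r : ℕ) (hr : (d : ℝ) / 2 < r)
    (ktilde : EuclideanSpace ℝ (Fin d) → EuclideanSpace ℝ (Fin d) → ℝ)
    (hksmooth : ContDiff ℝ r (Function.uncurry ktilde))
    (hkne : ∃ x x' : X, ktilde x x' ≠ 0)
    (Φ : X → H) (hfeature : ∀ x x' : X, ktilde x x' = ⟪Φ x, Φ x'⟫)
    (hgen : (Submodule.span ℝ (Set.range Φ)).topologicalClosure = ⊤)
    (L : X → Y → ℝ → ℝ) (hLnonneg : ∀ x y t, 0 ≤ L x y t)
    (hLconvex : ∀ x y, ConvexOn ℝ Set.univ (L x y))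
    (L' L'' : X → Y → ℝ → ℝ)
    (hL' : ∀ x y t, HasDerivAt (L x y) (L' x y t) t)
    (hL'' : ∀ x y t, HasDerivAt (L' x y) (L'' x y t) t)
    (hL'cont : Continuous fun q : (X × Y) × ℝ => L' q.1.1 q.1.2 q.2)
    (hL''cont : Continuous fun q : (X × Y) × ℝ => L'' q.1.1 q.1.2 q.2)
    (n : ℕ) (hn : 0 < n) (D : Fin n → X × Y) (lam : ℝ) (hlam : 0 < lam)
    -- `fDl` is the unique minimizer of the regularized empirical risk
    (fDl : H)
    (hfDlmin : ∀ g : H,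
      ((n : ℝ)⁻¹ * ∑ i, L (D i).1 (D i).2 ⟪fDl, Φ (D i).1⟫) + lam * ‖fDl‖ ^ 2 ≤
      ((n : ℝ)⁻¹ * ∑ i, L (D i).1 (D i).2 ⟪g, Φ (D i).1⟫) + lam * ‖g‖ ^ 2)
    (hfDluniq : ∀ g : H,
      ((n : ℝ)⁻¹ * ∑ i, L (D i).1 (D i).2 ⟪g, Φ (D i).1⟫) + lam * ‖g‖ ^ 2 ≤
      ((n : ℝ)⁻¹ * ∑ i, L (D i).1 (D i).2 ⟪fDl, Φ (D i).1⟫) + lam * ‖fDl‖ ^ 2 → g = fDl)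
    -- the invertible continuous linear operator `K_{D_n,λ}` and its inverse
    (K Kinv : H → H)
    (hK : ∀ f : H, K f = (2 * lam) • f + (n : ℝ)⁻¹ •
      ∑ i, (L'' (D i).1 (D i).2 ⟪fDl, Φ (D i).1⟫ * ⟪f, Φ (D i).1⟫) • Φ (D i).1)
    (hKinv₁ : ∀ f : H, Kinv (K f) = f) (hKinv₂ : ∀ f : H, K (Kinv f) = f)
    -- a maximal linearly independent subset `Φ(x_{i₁}), …, Φ(x_{i_ρ})` of the features
    (ρ : ℕ) (idx : Fin ρ → Fin n)
    (hli : LinearIndependent ℝ fun j : Fin ρ => Φ (D (idx j)).1)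
    -- the coefficients `β` expressing every feature in this basis, and the matrix `B_{D_n}`
    (β : Fin ρ → Fin n → ℝ)
    (hβ : ∀ i : Fin n, Φ (D i).1 = ∑ j, β j i • Φ (D (idx j)).1)
    (Bmat : Matrix (Fin ρ) (Fin n) ℝ) (hB : Bmat = Matrix.of β)
    -- the matrix `A_{D_n,λ} = 2λ Id + (1/n) L''_{D_n,λ} ⬝ (k(xᵢ,xₗ))`
    (Amat : Matrix (Fin n) (Fin n) ℝ)
    (hA : ∀ i l : Fin n, Amat i l = (if i = l then 2 * lam else 0) +
      (n : ℝ)⁻¹ * L'' (D i).1 (D i).2 ⟪fDl, Φ (D i).1⟫ * ktilde (D i).1 (D l).1)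
    (x : X)
    -- the right-hand side `w(x)`
    (w : Fin n → ℝ)
    (hw : ∀ i : Fin n, w i = -(1 / (2 * n * lam)) *
      (L'' (D i).1 (D i).2 ⟪fDl, Φ (D i).1⟫ * ktilde (D i).1 x))
    -- a Moore–Penrose pseudoinverse `(B A)⁻` of `B A`
    (pinv : Matrix (Fin n) (Fin ρ) ℝ)
    (hp₁ : Bmat * Amat * pinv * (Bmat * Amat) = Bmat * Amat)
    (hp₂ : pinv * (Bmat * Amat) * pinv = pinv)
    (hp₃ : (Bmat * Amat * pinv).transpose = Bmat * Amat * pinv)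
    (hp₄ : (pinv * (Bmat * Amat)).transpose = pinv * (Bmat * Amat)) :
    -- (i) `α = (BA)⁻ B w(x)` solves the linear system `B A α = B w(x)`
    (Bmat * Amat).mulVec (pinv.mulVec (Bmat.mulVec w)) = Bmat.mulVec w ∧
    -- (ii) every solution `α` of the system yields `K⁻¹(Φ(x)) = (1/(2λ)) Φ(x) + ∑ᵢ αᵢ Φ(xᵢ)`
    ∀ α : Fin n → ℝ, (Bmat * Amat).mulVec α = Bmat.mulVec w →
      Kinv (Φ x) = (2 * lam)⁻¹ • Φ x + ∑ i, α i • Φ (D i).1 :=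
  computation_of_Kinv_feature_general X Y ktilde Φ hfeature L'' n D lam hlam fDl K Kinv hK hKinv₁
    hKinv₂ ρ idx hli β hβ Bmat hB Amat hA x w hw pinv hp₁
end
end

section
/- Let K_P : H → H be the operator f ↦ 2λ_0 f + ∫ L''(x,y,f_{P,λ_0}(x)) f(x) Φ(x) P(d(x,y)) (Bochner integral), which is an invertible continuous linear operator. Then, for every f ∈ H: f(x) = 0 for P_X-almost every x ∈ X if and only if (K_P^{-1}(f))(x) = 0 for P_X-almost every x ∈ X. -/
open MeasureTheory ProbabilityTheory Filter Topology
open scoped RealInnerProductSpace NNReal ENNReal BigOperators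

noncomputable section

variable {d : ℕ} {H : Type} [NormedAddCommGroup H] [InnerProductSpace ℝ H] [CompleteSpace H]
  {Ω : Type} [MeasurableSpace Ω]

/-! Write `g = K_P⁻¹ f`, `c = L''(·, ·, f_{P,λ₀}(·))` and `T = ∫ c g Φ dP`, so that `f = 2λ₀ g + T`.
Convexity of the loss makes `c ≥ 0`. If `g = 0` a.e. then `T = 0` outright. If `f = 0` a.e. then
`0 = ⟪f, T⟫ = 2λ₀ ⟪g, T⟫ + ‖T‖²` with `⟪g, T⟫ = ∫ c g² ≥ 0`, so again `T = 0`. In both cases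
`f = 2λ₀ g`, and `f`, `g` vanish on the same set. -/

section InnerProductSpace

variable {α E : Type*} [NormedAddCommGroup E] [InnerProductSpace ℝ E]

theorem continuous_of_continuous_inner_apply [TopologicalSpace α] {φ : α → E}
    (h : Continuous fun p : α × α => ⟪φ p.1, φ p.2⟫) : Continuous φ := by
  rw [continuous_iff_continuousAt]
  intro x₀
  have hk : ∀ {f g : α → α}, Continuous f → Continuous g → Continuous fun x => ⟪φ (f x), φ (g x)⟫ :=
    fun hf hg => h.comp (hf.prodMk hg)
  have hdist : Continuous fun x => ‖φ x - φ x₀‖ := by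
    have heq : (fun x => ‖φ x - φ x₀‖) = fun x =>
        √(⟪φ x, φ x⟫ - ⟪φ x, φ x₀⟫ - ⟪φ x₀, φ x⟫ + ⟪φ x₀, φ x₀⟫) := by
      funext x
      rw [← inner_sub_sub_self, real_inner_self_eq_norm_sq, Real.sqrt_sq (norm_nonneg _)]
    rw [heq]
    exact ((((hk continuous_id continuous_id).sub (hk continuous_id continuous_const)).sub
      (hk continuous_const continuous_id)).add (hk continuous_const continuous_const)).sqrt
  rw [ContinuousAt, tendsto_iff_norm_sub_tendsto_zero]
  simpa using hdist.tendsto x₀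

variable [MeasurableSpace α] {μ : Measure α}

theorem integrable_mul_inner_smul [IsFiniteMeasure μ] {φ : α → E} {c : α → ℝ}
    (hφ : AEStronglyMeasurable φ μ) (hc : AEStronglyMeasurable c μ) {B C : ℝ}
    (hcB : ∀ z, |c z| ≤ B) (hφC : ∀ z, ‖φ z‖ ≤ C) (v : E) :
    Integrable (fun z => (c z * ⟪v, φ z⟫) • φ z) μ := by
  refine .of_bound ((hc.mul (aestronglyMeasurable_const.inner hφ)).smul hφ)
    (B * (‖v‖ * C) * C) (ae_of_all _ fun z => ?_)
  have hv : |⟪v, φ z⟫| ≤ ‖v‖ * C :=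
    (abs_real_inner_le_norm _ _).trans (by gcongr; exact hφC z)
  have hB : 0 ≤ B := (abs_nonneg _).trans (hcB z)
  have hC : 0 ≤ C := (norm_nonneg _).trans (hφC z)
  rw [norm_smul, norm_mul, Real.norm_eq_abs, Real.norm_eq_abs]
  gcongr
  exacts [hcB z, hφC z]

theorem ae_inner_eq_zero_iff_of_eq_smul_add_integral [CompleteSpace E] {φ : α → E} {c : α → ℝ}
    {f g : E} (hc : ∀ z, 0 ≤ c z) (hint : Integrable (fun z => (c z * ⟪g, φ z⟫) • φ z) μ)
    {a : ℝ} (ha : 0 < a) (hfg : f = a • g + ∫ z, (c z * ⟪g, φ z⟫) • φ z ∂μ) :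
    (∀ᵐ z ∂μ, ⟪f, φ z⟫ = 0) ↔ ∀ᵐ z ∂μ, ⟪g, φ z⟫ = 0 := by
  set T := ∫ z, (c z * ⟪g, φ z⟫) • φ z ∂μ
  have inner_T : ∀ w, ⟪w, T⟫ = ∫ z, c z * ⟪g, φ z⟫ * ⟪w, φ z⟫ ∂μ := fun w => by
    simp only [T, ← integral_inner hint, real_inner_smul_right]
  have inner_eq_of_T : T = 0 → ∀ z, ⟪f, φ z⟫ = a * ⟪g, φ z⟫ := fun hT z => by
    rw [hfg, hT, add_zero, real_inner_smul_left]
  constructor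
  · intro hf
    have hfT : ⟪f, T⟫ = 0 := by
      rw [inner_T]
      refine integral_eq_zero_of_ae ?_
      filter_upwards [hf] with z hz
      simp [hz]
    have hgT : 0 ≤ ⟪g, T⟫ := by
      rw [inner_T]
      exact integral_nonneg fun z => by
        simpa [mul_assoc] using mul_nonneg (hc z) (mul_self_nonneg ⟪g, φ z⟫)
    have hT : T = 0 := by
      have h : ⟪f, T⟫ = a * ⟪g, T⟫ + ‖T‖ ^ 2 := by
        rw [hfg, inner_add_left, real_inner_smul_left, real_inner_self_eq_norm_sq]
      exact norm_eq_zero.mp (by nlinarith [norm_nonneg T])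
    filter_upwards [hf] with z hz
    rw [inner_eq_of_T hT] at hz
    exact (mul_eq_zero.mp hz).resolve_left ha.ne'
  · intro hg
    have hT : T = 0 := by
      refine integral_eq_zero_of_ae ?_
      filter_upwards [hg] with z hz
      simp [hz]
    filter_upwards [hg] with z hz
    rw [inner_eq_of_T hT, hz, mul_zero]

end InnerProductSpace

theorem MeasureTheory.Measure.ae_fst_iff {α β : Type*} [MeasurableSpace α] [MeasurableSpace β]
    {ρ : Measure (α × β)} {p : α → Prop} (hp : MeasurableSet {x | p x}) :
    (∀ᵐ x ∂ρ.fst, p x) ↔ ∀ᵐ z ∂ρ, p z.1 :=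
  ae_map_iff measurable_fst.aemeasurable hp

namespace RegKernelSetting

variable (S : RegKernelSetting d H Ω)

instance : CompactSpace S.X :=
  isCompact_iff_compactSpace.mp (Metric.isCompact_of_isClosed_isBounded S.hXclosed S.hXbdd)

theorem exists_bound_Φ : ∃ C, 0 ≤ C ∧ ∀ x, ‖S.Φ x‖ ≤ C := by
  obtain ⟨C, hC⟩ := isCompact_univ.exists_bound_of_continuousOn S.continuous_Φ.continuousOn
  exact ⟨max C 0, le_max_right _ _, fun x => (hC x (Set.mem_univ x)).trans (le_max_left _ _)⟩

theorem exists_bound_L''_inner (g : H) :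
    ∃ B, ∀ z : S.X × S.Y, |S.L'' z.1 z.2 ⟪g, S.Φ z.1⟫| ≤ B := by
  obtain ⟨C, hC0, hC⟩ := S.exists_bound_Φ
  refine ⟨S.b'' (‖g‖ * C + 1), fun z => S.hb''bound _ (by positivity) _ _ _ ?_⟩
  calc |⟪g, S.Φ z.1⟫| ≤ ‖g‖ * ‖S.Φ z.1‖ := abs_real_inner_le_norm _ _
    _ ≤ ‖g‖ * C + 1 := by nlinarith [hC z.1, norm_nonneg g]

theorem integrable_L''_mul_inner_smul (g v : H) :
    Integrable (fun z : S.X × S.Y => (S.L'' z.1 z.2 ⟪g, S.Φ z.1⟫ * ⟪v, S.Φ z.1⟫) • S.Φ z.1)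
      S.P := by
  have := S.hP
  obtain ⟨C, -, hC⟩ := S.exists_bound_Φ
  obtain ⟨B, hB⟩ := S.exists_bound_L''_inner g
  have hΦ : Continuous fun z : S.X × S.Y => S.Φ z.1 := S.continuous_Φ.comp continuous_fst
  have hc : Continuous fun z : S.X × S.Y => S.L'' z.1 z.2 ⟪g, S.Φ z.1⟫ :=
    S.hL''cont.comp (continuous_id.prodMk (continuous_const.inner hΦ))
  exact integrable_mul_inner_smul hΦ.aestronglyMeasurable hc.aestronglyMeasurable hB
    (fun z => hC z.1) v

theorem ae_fst_inner_eq_zero_iff (v : H) :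
    (∀ᵐ x ∂S.P.fst, ⟪v, S.Φ x⟫ = 0) ↔ ∀ᵐ z ∂S.P, ⟪v, S.Φ z.1⟫ = 0 :=
  Measure.ae_fst_iff
    (isClosed_eq (continuous_const.inner S.continuous_Φ) continuous_const).measurableSet

end RegKernelSetting

theorem KPinv_preserves_ae_zero_general
    (S : RegKernelSetting d H Ω) (lam0 : ℝ) (hlam0 : 0 < lam0)
    (KP KPinv : H →L[ℝ] H)
    (hKP : ∀ f : H, KP f = (2 * lam0) • f +
      ∫ (z : S.X × S.Y), (S.L'' z.1 z.2 ⟪S.fP lam0, S.Φ z.1⟫ * ⟪f, S.Φ z.1⟫) • S.Φ z.1 ∂S.P)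
    (hKPinv₂ : ∀ f : H, KP (KPinv f) = f) :
    ∀ f : H, (∀ᵐ x ∂S.P.fst, ⟪f, S.Φ x⟫ = 0) ↔ ∀ᵐ x ∂S.P.fst, ⟪KPinv f, S.Φ x⟫ = 0 := by
  intro f
  have hf : f = (2 * lam0) • KPinv f + ∫ z : S.X × S.Y,
      (S.L'' z.1 z.2 ⟪S.fP lam0, S.Φ z.1⟫ * ⟪KPinv f, S.Φ z.1⟫) • S.Φ z.1 ∂S.P := by
    rw [← hKP, hKPinv₂]
  rw [S.ae_fst_inner_eq_zero_iff, S.ae_fst_inner_eq_zero_iff]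
  exact ae_inner_eq_zero_iff_of_eq_smul_add_integral (fun z => S.L''_nonneg _ _ _)
    (S.integrable_L''_mul_inner_smul _ _) (by positivity) hf

/-- the operator `K_P⁻¹` preserves `P_X`-a.e. vanishing.
Let `K_P : H → H` be the invertible continuous linear operator
`f ↦ 2λ₀ f + ∫ L''(x,y,f_{P,λ₀}(x)) f(x) Φ(x) P(d(x,y))`.  Then, for every `f ∈ H`:
`f = 0` `P_X`-a.s. if and only if `K_P⁻¹(f) = 0` `P_X`-a.s. -/
theorem KPinv_preserves_ae_zero
    (S : RegKernelSetting d H Ω) (lam0 : ℝ) (hlam0 : 0 < lam0)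
    (KP KPinv : H →L[ℝ] H)
    (hKP : ∀ f : H, KP f = (2 * lam0) • f +
      ∫ (z : S.X × S.Y), (S.L'' z.1 z.2 ⟪S.fP lam0, S.Φ z.1⟫ * ⟪f, S.Φ z.1⟫) • S.Φ z.1 ∂S.P)
    (hKPinv₁ : ∀ f : H, KPinv (KP f) = f) (hKPinv₂ : ∀ f : H, KP (KPinv f) = f) :
    ∀ f : H, (∀ᵐ x ∂S.P.fst, ⟪f, S.Φ x⟫ = 0) ↔ ∀ᵐ x ∂S.P.fst, ⟪KPinv f, S.Φ x⟫ = 0 :=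
  KPinv_preserves_ae_zero_general S lam0 hlam0 KP KPinv hKP hKPinv₂
end
end
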